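/- Let I ⊆ V be an independent set of the conflict graph G. Then there exists a permutation π of Fin n such that A x = B(π x) for all x, and for every (i,j) ∈ I one has π i = j and π(i+1) = j+1. In other words, every independent set of G corresponds to a set of duos that can be simultaneously preserved by a perfect matching of equal letters. -/
import Mathlib


/-- `(i, j)` is a vertex: `A i = B j` and `A (i+1) = B (j+1)`,
with the required index bounds (`i, j ≤ n - 2`, i.e. `i + 1 < n` and `j + 1 < n`). -/
def IsVertex {Γ : Type*} (n : ℕ) (A B : Fin n → Γ) (i j : ℕ) : Prop :=
  ∃ (hi : i + 1 < n) (hj : j + 1 < n),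
    A ⟨i, Nat.lt_of_succ_lt hi⟩ = B ⟨j, Nat.lt_of_succ_lt hj⟩ ∧
    A ⟨i + 1, hi⟩ = B ⟨j + 1, hj⟩

/-- Adjacency in the conflict graph `G`. -/
def ConflictAdj {Γ : Type*} (n : ℕ) (A B : Fin n → Γ) (v w : ℕ × ℕ) : Prop :=
  IsVertex n A B v.1 v.2 ∧ IsVertex n A B w.1 w.2 ∧ v ≠ w ∧
  ∃ p : ℤ, (p = -1 ∨ p = 0 ∨ p = 1) ∧
    (((w.1 : ℤ) = (v.1 : ℤ) + p ∧ (w.2 : ℤ) ≠ (v.2 : ℤ) + p) ∨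
     ((w.2 : ℤ) = (v.2 : ℤ) + p ∧ (w.1 : ℤ) ≠ (v.1 : ℤ) + p))

/-- A letter-preserving partial injection defined on a finset can be extended to a
letter-preserving permutation, given that some letter-preserving permutation exists. -/
lemma extend_perm {α β : Type*} [Fintype α] [DecidableEq α]
    (fA fB : α → β) (s : Finset α) (m : α → α)
    (hm : ∀ x ∈ s, ∀ y ∈ s, m x = m y → x = y)
    (hms : ∀ x ∈ s, fA x = fB (m x)) :
    ∀ (k : ℕ) (e : Equiv.Perm α), (∀ x, fA x = fB (e x)) →
      (s.filter fun x => e x ≠ m x).card ≤ k →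
      ∃ e' : Equiv.Perm α, (∀ x, fA x = fB (e' x)) ∧ ∀ x ∈ s, e' x = m x := by
  intro k
  induction k with
  | zero =>
    intro e he hc
    refine ⟨e, he, fun x hx => ?_⟩
    by_contra hne
    have hmem : x ∈ s.filter fun x => e x ≠ m x := Finset.mem_filter.2 ⟨hx, hne⟩
    have := Finset.card_pos.2 ⟨x, hmem⟩
    omega
  | succ k ih =>
    intro e he hc
    by_cases hes : ∀ x ∈ s, e x = m x
    · exact ⟨e, he, hes⟩
    push_neg at hes
    obtain ⟨x, hx, hxne⟩ := hes
    set x' := e.symm (m x) with hx'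
    have hex' : e x' = m x := by simp [hx']
    have hxx' : x' ≠ x := fun h => hxne (h ▸ hex')
    set e' := e * Equiv.swap x x' with he'def
    have he'x : e' x = m x := by
      simp [he'def, Equiv.swap_apply_left, hex']
    have he'x' : e' x' = e x := by
      simp [he'def, Equiv.swap_apply_right]
    have he'z : ∀ z, z ≠ x → z ≠ x' → e' z = e z := by
      intro z h1 h2
      simp [he'def, Equiv.swap_apply_of_ne_of_ne h1 h2]
    have hpres : ∀ z, fA z = fB (e' z) := by
      intro z
      rcases eq_or_ne z x with rfl | h1
      · rw [he'x]; exact hms _ hx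
      rcases eq_or_ne z x' with rfl | h2
      · rw [he'x']
        calc fA x' = fB (e x') := he x'
          _ = fB (m x) := by rw [hex']
          _ = fA x := (hms x hx).symm
          _ = fB (e x) := he x
      · rw [he'z z h1 h2]; exact he z
    have hsub : (s.filter fun z => e' z ≠ m z) ⊆ (s.filter fun z => e z ≠ m z).erase x := by
      intro z hz
      rw [Finset.mem_filter] at hz
      obtain ⟨hzs, hzne⟩ := hz
      have hzx : z ≠ x := fun h => hzne (h ▸ he'x)
      refine Finset.mem_erase.2 ⟨hzx, Finset.mem_filter.2 ⟨hzs, ?_⟩⟩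
      rcases eq_or_ne z x' with rfl | h2
      · intro heq
        have hmm : m x' = m x := by rw [← heq, hex']
        exact hxx' (hm x' hzs x hx hmm)
      · rw [← he'z z hzx h2]; exact hzne
    have hxmem : x ∈ s.filter fun z => e z ≠ m z := Finset.mem_filter.2 ⟨hx, hxne⟩
    have hcard : (s.filter fun z => e' z ≠ m z).card ≤ k := by
      have h1 := Finset.card_le_card hsub
      have h3 := Finset.card_erase_of_mem hxmem
      have h4 := Finset.card_pos.2 ⟨x, hxmem⟩
      omega
    exact ih e' hpres hcard

theorem stmt_17 {Γ : Type*} (n : ℕ) (hn : 2 ≤ n) (A B : Fin n → Γ)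
    (σ : Equiv.Perm (Fin n)) (hB : B = A ∘ σ)
    (I : Set (ℕ × ℕ))
    (hIvert : ∀ v ∈ I, IsVertex n A B v.1 v.2)
    (hIind : ∀ v ∈ I, ∀ w ∈ I, ¬ ConflictAdj n A B v w) :
    ∃ π : Equiv.Perm (Fin n),
      (∀ x : Fin n, A x = B (π x)) ∧
      ∀ v ∈ I, ∀ hv : v.1 + 1 < n,
        (π ⟨v.1, by omega⟩ : Fin n).1 = v.2 ∧
        (π ⟨v.1 + 1, hv⟩ : Fin n).1 = v.2 + 1 := by
  classical
  have key : ∀ v ∈ I, ∀ w ∈ I, ∀ p : ℤ, (p = -1 ∨ p = 0 ∨ p = 1) →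
      (((w.1 : ℤ) = v.1 + p → (w.2 : ℤ) = v.2 + p) ∧
       ((w.2 : ℤ) = v.2 + p → (w.1 : ℤ) = v.1 + p)) := by
    intro v hv w hw p hp
    constructor
    · intro h
      by_contra hne
      have vne : v ≠ w := by rintro rfl; omega
      exact hIind v hv w hw ⟨hIvert v hv, hIvert w hw, vne, p, hp, Or.inl ⟨h, hne⟩⟩
    · intro h
      by_contra hne
      have vne : v ≠ w := by rintro rfl; omega
      exact hIind v hv w hw ⟨hIvert v hv, hIvert w hw, vne, p, hp, Or.inr ⟨h, hne⟩⟩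
  have H1 : ∀ v ∈ I, ∀ w ∈ I, w.1 = v.1 → w.2 = v.2 := by
    intro v hv w hw h
    have := (key v hv w hw 0 (by norm_num)).1 (by omega)
    omega
  have H2 : ∀ v ∈ I, ∀ w ∈ I, w.2 = v.2 → w.1 = v.1 := by
    intro v hv w hw h
    have := (key v hv w hw 0 (by norm_num)).2 (by omega)
    omega
  have H3 : ∀ v ∈ I, ∀ w ∈ I, w.1 = v.1 + 1 → w.2 = v.2 + 1 := by
    intro v hv w hw h
    have := (key v hv w hw 1 (by norm_num)).1 (by omega)
    omega
  have H4 : ∀ v ∈ I, ∀ w ∈ I, w.2 = v.2 + 1 → w.1 = v.1 + 1 := by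
    intro v hv w hw h
    have := (key v hv w hw 1 (by norm_num)).2 (by omega)
    omega
  have hbd : ∀ v ∈ I, v.1 + 1 < n ∧ v.2 + 1 < n := by
    intro v hv
    obtain ⟨hi, hj, -, -⟩ := hIvert v hv
    exact ⟨hi, hj⟩
  -- construct the partial map m
  have hxm : ∀ x : Fin n, ∃ y : Fin n,
      (∀ v ∈ I, v.1 = x.1 → y.1 = v.2) ∧ (∀ v ∈ I, v.1 + 1 = x.1 → y.1 = v.2 + 1) := by
    intro x
    by_cases h : ∃ v ∈ I, v.1 = x.1
    · obtain ⟨v, hv, hvx⟩ := h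
      refine ⟨⟨v.2, Nat.lt_of_succ_lt (hbd v hv).2⟩, fun w hw hwx => ?_, fun w hw hwx => ?_⟩
      · exact H1 w hw v hv (by omega)
      · exact H3 w hw v hv (by omega)
    · by_cases h2 : ∃ v ∈ I, v.1 + 1 = x.1
      · obtain ⟨v, hv, hvx⟩ := h2
        refine ⟨⟨v.2 + 1, (hbd v hv).2⟩, fun w hw hwx => absurd ⟨w, hw, hwx⟩ h,
          fun w hw hwx => ?_⟩
        have := H1 v hv w hw (by omega)
        show v.2 + 1 = w.2 + 1
        omega
      · exact ⟨x, fun w hw hwx => absurd ⟨w, hw, hwx⟩ h,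
          fun w hw hwx => absurd ⟨w, hw, hwx⟩ h2⟩
  choose m hm using hxm
  set s : Finset (Fin n) :=
    Finset.univ.filter (fun x : Fin n => (∃ v ∈ I, v.1 = x.1) ∨ (∃ v ∈ I, v.1 + 1 = x.1))
    with hs
  have hmem : ∀ x : Fin n,
      x ∈ s ↔ ((∃ v ∈ I, v.1 = x.1) ∨ (∃ v ∈ I, v.1 + 1 = x.1)) := by
    intro x; rw [hs, Finset.mem_filter]; simp
  have hinj : ∀ x ∈ s, ∀ y ∈ s, m x = m y → x = y := by
    intro x hx y hy hxy
    rw [hmem] at hx hy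
    have hxy1 : (m x).1 = (m y).1 := by rw [hxy]
    apply Fin.ext
    rcases hx with ⟨v, hv, hvx⟩ | ⟨v, hv, hvx⟩ <;> rcases hy with ⟨w, hw, hwy⟩ | ⟨w, hw, hwy⟩
    · have e1 := (hm x).1 v hv hvx
      have e2 := (hm y).1 w hw hwy
      have := H2 w hw v hv (by omega)
      omega
    · have e1 := (hm x).1 v hv hvx
      have e2 := (hm y).2 w hw hwy
      have := H4 w hw v hv (by omega)
      omega
    · have e1 := (hm x).2 v hv hvx
      have e2 := (hm y).1 w hw hwy
      have := H4 v hv w hw (by omega)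
      omega
    · have e1 := (hm x).2 v hv hvx
      have e2 := (hm y).2 w hw hwy
      have := H2 w hw v hv (by omega)
      omega
  have hlet : ∀ x ∈ s, A x = B (m x) := by
    intro x hx
    rw [hmem] at hx
    rcases hx with ⟨v, hv, hvx⟩ | ⟨v, hv, hvx⟩
    · obtain ⟨hi, hj, hAB, hAB'⟩ := hIvert v hv
      have e1 : (m x).1 = v.2 := (hm x).1 v hv hvx
      have hx1 : x = ⟨v.1, Nat.lt_of_succ_lt hi⟩ := Fin.ext hvx.symm
      have hx2 : m x = ⟨v.2, Nat.lt_of_succ_lt hj⟩ := Fin.ext e1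
      rw [hx2, hx1]; exact hAB
    · obtain ⟨hi, hj, hAB, hAB'⟩ := hIvert v hv
      have e1 : (m x).1 = v.2 + 1 := (hm x).2 v hv hvx
      have hx1 : x = ⟨v.1 + 1, hi⟩ := Fin.ext hvx.symm
      have hx2 : m x = ⟨v.2 + 1, hj⟩ := Fin.ext e1
      rw [hx2, hx1]; exact hAB'
  have hσ : ∀ x : Fin n, A x = B (σ.symm x) := by
    intro x; rw [hB]; simp
  obtain ⟨π, hπ1, hπ2⟩ :=
    extend_perm A B s m hinj hlet ((s.filter fun x => σ.symm x ≠ m x).card) σ.symm hσ le_rfl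
  refine ⟨π, hπ1, fun v hv hv1 => ?_⟩
  constructor
  · have hxs : (⟨v.1, by omega⟩ : Fin n) ∈ s := (hmem _).2 (Or.inl ⟨v, hv, rfl⟩)
    rw [hπ2 _ hxs]
    exact (hm _).1 v hv rfl
  · have hxs : (⟨v.1 + 1, hv1⟩ : Fin n) ∈ s := (hmem _).2 (Or.inr ⟨v, hv, rfl⟩)
    rw [hπ2 _ hxs]
    exact (hm _).2 v hv rfl
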